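/- arXiv:2309.06913 — 2 statements merged into one kernel-verified Lean document; each statement's English description precedes it below -/
import Mathlib

section
/- Let ν and μ be finite measures on (X,𝒜) and ε > 0. Then there exists a countable measurable partition 𝒟 of X such that for every B ∈ 𝒟 with μ(B) > 0, the set {ν(C)/μ(C) : C ⊆ B measurable, μ(C) > 0} is bounded above and sup − inf ≤ ε, where sup and inf are taken over this set. -/
/-
Hahn-decompose `ν` against `(k ε) • μ` for every `k : ℕ`, getting sets `s k` with `ν ≤ k ε μ`
on `s k` and `k ε μ ≤ ν` off it. The sets `s k \ ⋃_{i < k} s i` lie in `s k \ s (k - 1)`, so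
on them every ratio `ν C / μ C` lies in `[(k - 1) ε, k ε]`. What remains is the set of points
outside every `s k`, on which `k ε μ ≤ ν` for all `k`; since `ν` is finite, it is `μ`-null.
-/

open MeasureTheory Set Function
open scoped NNReal ENNReal

def ratioSet {X : Type*} [MeasurableSpace X] (ν μ : Measure X) (B : Set X) : Set ℝ :=
  {r : ℝ | ∃ C : Set X, MeasurableSet C ∧ C ⊆ B ∧ 0 < μ C ∧
    r = (ν C).toReal / (μ C).toReal}

section Partition

variable {X : Type*}

def disjointedWithCompl (s : ℕ → Set X) : ℕ → Set X
  | 0 => (⋃ k, s k)ᶜ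
  | n + 1 => disjointed s n

theorem measurableSet_disjointedWithCompl [MeasurableSpace X] {s : ℕ → Set X}
    (hs : ∀ k, MeasurableSet (s k)) : ∀ n, MeasurableSet (disjointedWithCompl s n)
  | 0 => (MeasurableSet.iUnion hs).compl
  | n + 1 => MeasurableSet.disjointed hs n

theorem pairwise_disjoint_disjointedWithCompl (s : ℕ → Set X) :
    Pairwise (Disjoint on disjointedWithCompl s) := by
  have hcompl (n : ℕ) : Disjoint (⋃ k, s k)ᶜ (disjointed s n) :=
    disjoint_compl_left_iff_subset.2 ((disjointed_subset s n).trans (subset_iUnion s n))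
  rintro (_ | m) (_ | n) hmn
  · exact absurd rfl hmn
  · exact hcompl n
  · exact (hcompl m).symm
  · exact disjoint_disjointed s fun h => hmn (congrArg (· + 1) h)

theorem iUnion_disjointedWithCompl (s : ℕ → Set X) : ⋃ n, disjointedWithCompl s n = univ := by
  rw [← union_iUnion_nat_succ]
  simp only [disjointedWithCompl, iUnion_disjointed, compl_union_self]

theorem disjointed_add_one_subset_compl (s : ℕ → Set X) (n : ℕ) :
    disjointed s (n + 1) ⊆ (s n)ᶜ := by
  rw [disjointed_eq_inter_compl]
  exact fun x hx => mem_iInter₂.1 hx.2 n n.lt_succ_self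

end Partition

section Ratio

variable {X : Type*} [MeasurableSpace X]

namespace MeasureTheory

theorem IsHahnDecomposition.apply_le_of_subset {μ ν : Measure X} {s t : Set X}
    (h : IsHahnDecomposition μ ν s) (hts : t ⊆ s) : μ t ≤ ν t := by
  simpa [Measure.restrict_apply' h.measurableSet, inter_eq_left.2 hts] using h.le_on t

theorem IsHahnDecomposition.apply_le_of_subset_compl {μ ν : Measure X} {s t : Set X}
    (h : IsHahnDecomposition μ ν s) (hts : t ⊆ sᶜ) : ν t ≤ μ t :=
  h.compl.apply_le_of_subset hts

end MeasureTheory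

theorem measure_eq_zero_of_forall_natCast_mul_smul_le {ν μ : Measure X} [IsFiniteMeasure ν]
    {δ : ℝ≥0} (hδ : δ ≠ 0) {R : Set X} (h : ∀ k : ℕ, ((k * δ) • μ) R ≤ ν R) : μ R = 0 := by
  by_contra hR
  obtain ⟨k, hk⟩ := ENNReal.exists_nat_mul_gt (a := δ * μ R)
    (mul_ne_zero (ENNReal.coe_ne_zero.2 hδ) hR) (measure_ne_top ν R)
  exact (h k).not_gt (by simpa [mul_assoc] using hk)

theorem ratioSet_subset_Icc {ν μ : Measure X} [IsFiniteMeasure μ] {B : Set X} {a b : ℝ≥0}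
    (ha : ∀ C ⊆ B, (a • μ) C ≤ ν C) (hb : ∀ C ⊆ B, ν C ≤ (b • μ) C) :
    ratioSet ν μ B ⊆ Icc (a : ℝ) b := by
  rintro _ ⟨C, -, hCB, hμC, rfl⟩
  have hμC' : 0 < (μ C).toReal := ENNReal.toReal_pos hμC.ne' (measure_ne_top μ C)
  have hνC : ν C ≠ ∞ := ne_top_of_le_ne_top (measure_ne_top _ C) (hb C hCB)
  rw [mem_Icc, le_div_iff₀ hμC', div_le_iff₀ hμC']
  constructor
  · simpa using ENNReal.toReal_mono hνC (ha C hCB)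
  · simpa using ENNReal.toReal_mono (measure_ne_top _ C) (hb C hCB)

theorem ratioSet_disjointed_subset_Icc {ν μ : Measure X} [IsFiniteMeasure μ] {s : ℕ → Set X}
    {δ : ℝ≥0} (hs : ∀ k : ℕ, IsHahnDecomposition ν ((k * δ) • μ) (s k)) (n : ℕ) :
    ratioSet ν μ (disjointed s n) ⊆ Icc ((n : ℝ) * δ - δ) (n * δ) := by
  have hle (C) (hC : C ⊆ disjointed s n) : ν C ≤ ((n * δ) • μ) C :=
    (hs n).apply_le_of_subset (hC.trans (disjointed_subset s n))
  cases n with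
  | zero =>
    refine (ratioSet_subset_Icc (a := 0) (by simp) hle).trans (Icc_subset_Icc ?_ ?_) <;> simp
  | succ m =>
    have hge (C) (hC : C ⊆ disjointed s (m + 1)) : ((m * δ) • μ) C ≤ ν C :=
      (hs m).apply_le_of_subset_compl (hC.trans (disjointed_add_one_subset_compl s m))
    refine (ratioSet_subset_Icc hge hle).trans (Icc_subset_Icc ?_ ?_) <;> push_cast <;> linarith

theorem sSup_sub_sInf_le_of_subset_Icc {S : Set ℝ} {a b : ℝ} (hab : a ≤ b) (hS : S ⊆ Icc a b) :
    sSup S - sInf S ≤ b - a := by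
  rw [← Real.diam_eq (Metric.isBounded_Icc a b |>.subset hS), ← Real.diam_Icc hab]
  exact Metric.diam_mono hS (Metric.isBounded_Icc a b)

end Ratio

/-- for every `ε > 0` there is a countable measurable partition `𝒟`
of `X` such that on every `B ∈ 𝒟` of positive `μ`-measure the ratio set is bounded
above and `sup − inf ≤ ε`. -/
theorem exists_partition_ratio_approx {X : Type*} [MeasurableSpace X]
    (ν μ : Measure X) [IsFiniteMeasure ν] [IsFiniteMeasure μ]
    (ε : ℝ) (hε : 0 < ε) :
    ∃ D : ℕ → Set X,
      (∀ n, MeasurableSet (D n)) ∧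
      Pairwise (Function.onFun Disjoint D) ∧
      (⋃ n, D n) = Set.univ ∧
      ∀ n, 0 < μ (D n) →
        BddAbove (ratioSet ν μ (D n)) ∧
        sSup (ratioSet ν μ (D n)) - sInf (ratioSet ν μ (D n)) ≤ ε := by
  have hδ : ((ε.toNNReal : ℝ≥0) : ℝ) = ε := Real.coe_toNNReal ε hε.le
  choose s hs using fun k : ℕ => exists_isHahnDecomposition ν ((k * ε.toNNReal) • μ)
  refine ⟨disjointedWithCompl s, measurableSet_disjointedWithCompl fun k => (hs k).measurableSet,
    pairwise_disjoint_disjointedWithCompl s, iUnion_disjointedWithCompl s, ?_⟩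
  rintro (_ | n) hpos
  · refine absurd (measure_eq_zero_of_forall_natCast_mul_smul_le (ν := ν)
      (Real.toNNReal_pos.2 hε).ne' fun k => ?_) hpos.ne'
    exact (hs k).apply_le_of_subset_compl (compl_subset_compl.2 (subset_iUnion s k))
  · have hIcc := ratioSet_disjointed_subset_Icc hs n
    refine ⟨bddAbove_Icc.mono hIcc, ?_⟩
    calc _ ≤ (n : ℝ) * ε.toNNReal - (n * ε.toNNReal - ε.toNNReal) :=
          sSup_sub_sInf_le_of_subset_Icc (by linarith [hδ]) hIcc
      _ = ε := by rw [hδ]; ring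
end

section
/- Let ν, μ be finite measures on (X,𝒜) and 𝒟 a countable measurable partition. Define f⁻_𝒟 as the step function taking value inf_{C⊆B,μ(C)>0} ν(C)/μ(C) on each B ∈ 𝒟 with μ(B) > 0, and 0 elsewhere. Then for every A ∈ 𝒜, ∫_A f⁻_𝒟 dμ ≤ ν(A). -/
open MeasureTheory ENNReal

/-- `inf_{C ⊆ B, μ(C) > 0} ν(C)/μ(C)`. -/
noncomputable def ratioInf {X : Type*} [MeasurableSpace X]
    (ν μ : Measure X) (B : Set X) : ℝ≥0∞ :=
  ⨅ C ∈ {C : Set X | MeasurableSet C ∧ C ⊆ B ∧ 0 < μ C}, ν C / μ C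

/-- The lower step function `f⁻_𝒟` determined by a countable measurable
partition `𝒟 = (D n)`: on a block `B` of positive `μ`-measure it takes the value
`inf_{C ⊆ B, μ(C) > 0} ν(C)/μ(C)`, and `0` elsewhere. -/
noncomputable def stepInf {X : Type*} [MeasurableSpace X]
    (ν μ : Measure X) (D : ℕ → Set X) : X → ℝ≥0∞ :=
  fun s => ∑' n, (D n).indicator
    (fun _ => if 0 < μ (D n) then ratioInf ν μ (D n) else 0) s

/-! On a block `B`, the value `c_B ≤ ratioInf ν μ B` satisfies
`c_B μ(A ∩ B) ≤ ν(A ∩ B)`, by testing the infimum against `C = A ∩ B`. Integrating the step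
function over `A` gives `∑_B c_B μ(A ∩ B) ≤ ∑_B ν(A ∩ B) ≤ ν(A)`, the last step by
disjointness of the blocks. -/

section

variable {X : Type*} [MeasurableSpace X]

theorem ratioInf_le_div (ν μ : Measure X) {B C : Set X} (hC : MeasurableSet C) (hCB : C ⊆ B)
    (hμC : 0 < μ C) : ratioInf ν μ B ≤ ν C / μ C :=
  biInf_le _ ⟨hC, hCB, hμC⟩

theorem ratioInf_mul_le (ν μ : Measure X) {B C : Set X} (hC : MeasurableSet C) (hCB : C ⊆ B) :
    ratioInf ν μ B * μ C ≤ ν C := by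
  rcases eq_zero_or_pos (μ C) with hμC | hμC
  · simp [hμC]
  · exact mul_le_of_le_div (ratioInf_le_div ν μ hC hCB hμC)

theorem ite_pos_ratioInf_le (ν μ : Measure X) (B : Set X) :
    (if 0 < μ B then ratioInf ν μ B else 0) ≤ ratioInf ν μ B := by
  split_ifs <;> simp

theorem setLIntegral_tsum_indicator_const (μ : Measure X) {D : ℕ → Set X}
    (hDm : ∀ n, MeasurableSet (D n)) (c : ℕ → ℝ≥0∞) (A : Set X) :
    ∫⁻ s in A, ∑' n, (D n).indicator (fun _ => c n) s ∂μ = ∑' n, c n * μ (A ∩ D n) := by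
  rw [lintegral_tsum fun n => (measurable_const.indicator (hDm n)).aemeasurable]
  congr 1 with n
  rw [lintegral_indicator_const (hDm n), Measure.restrict_apply (hDm n), Set.inter_comm]

theorem tsum_measure_inter_le_of_disjoint (ν : Measure X) {D : ℕ → Set X}
    (hDm : ∀ n, MeasurableSet (D n)) (hDd : Pairwise (Function.onFun Disjoint D))
    {A : Set X} (hA : MeasurableSet A) : ∑' n, ν (A ∩ D n) ≤ ν A :=
  calc ∑' n, ν (A ∩ D n) ≤ ν (⋃ n, A ∩ D n) :=
        tsum_meas_le_meas_iUnion_of_disjoint ν (fun n => hA.inter (hDm n))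
          fun _ _ hij => (hDd hij).mono Set.inter_subset_right Set.inter_subset_right
    _ ≤ ν A := measure_mono (Set.iUnion_subset fun _ => Set.inter_subset_left)

end

theorem stepInf_lintegral_le_general {X : Type*} [MeasurableSpace X]
    (ν μ : Measure X)
    (D : ℕ → Set X)
    (hDm : ∀ n, MeasurableSet (D n))
    (hDd : Pairwise (Function.onFun Disjoint D)) :
    ∀ A : Set X, MeasurableSet A →
      ∫⁻ s in A, stepInf ν μ D s ∂μ ≤ ν A := by
  intro A hA
  calc ∫⁻ s in A, stepInf ν μ D s ∂μ
      = ∑' n, (if 0 < μ (D n) then ratioInf ν μ (D n) else 0) * μ (A ∩ D n) :=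
        setLIntegral_tsum_indicator_const μ hDm _ A
    _ ≤ ∑' n, ν (A ∩ D n) := ENNReal.tsum_le_tsum fun n =>
        (mul_le_mul_left (ite_pos_ratioInf_le ν μ (D n)) _).trans
          (ratioInf_mul_le ν μ (hA.inter (hDm n)) Set.inter_subset_right)
    _ ≤ ν A := tsum_measure_inter_le_of_disjoint ν hDm hDd hA

/-- `∫_A f⁻_𝒟 dμ ≤ ν(A)` for every measurable `A`. -/
theorem stepInf_lintegral_le {X : Type*} [MeasurableSpace X]
    (ν μ : Measure X) [IsFiniteMeasure ν] [IsFiniteMeasure μ]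
    (D : ℕ → Set X)
    (hDm : ∀ n, MeasurableSet (D n))
    (hDd : Pairwise (Function.onFun Disjoint D))
    (hDu : (⋃ n, D n) = Set.univ) :
    ∀ A : Set X, MeasurableSet A →
      ∫⁻ s in A, stepInf ν μ D s ∂μ ≤ ν A :=
  stepInf_lintegral_le_general ν μ D hDm hDd
end
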